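/- (Simplified residual for left eigenpairs of kernelized EDMD, Algorithm 5) Suppose Q̂ ∈ ℂ^{M×r} with Q̂ᴴ Q̂ = I_r, Ẑ ∈ ℂ^{N×r} with Ẑᴴ Ẑ = I_r, and Σ̂ ∈ ℂ^{r×r} invertible and Hermitian satisfy (Ŵ Ψ_X)ᴴ Q̂ = Ẑ Σ̂. Define Ψ̂_X = (Ŵ Ψ_X)ᴴ Q̂ Σ̂⁻¹, Ψ̂_Y = (Ŵ Ψ_Y)ᴴ Q̂ Σ̂⁻¹, K̂ = Σ̂⁻¹ Q̂ᴴ (Ŵ Ψ_Y)(Ŵ Ψ_X)ᴴ Q̂ Σ̂⁻¹, and L̂ = (Q̂ Σ̂⁻¹)ᴴ (Ŵ Ψ_Y)(Ŵ Ψ_Y)ᴴ (Q̂ Σ̂⁻¹). If v ∈ ℂ^r is a left eigenvector of K̂ with eigenvalue λ, i.e. vᴴ K̂ = λ vᴴ (equivalently K̂ᴴ v = λ̄ v), then ‖Ψ̂_Y v − λ̄ Ψ̂_X v‖² = vᴴ L̂ v − |λ|² ‖v‖²; hence for v ≠ 0 the residual equals sqrt((vᴴ L̂ v)/‖v‖²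 − |λ|²). -/

import Mathlib

/-!
The relation `(Ŵ Ψ_X)ᴴ Q̂ = Ẑ Σ̂` gives `Ψ̂_X = Ẑ`, so `Ψ̂_X` is an isometry, while unfolding the
definitions (with `Σ̂⁻¹` Hermitian) gives `Ψ̂_Xᴴ Ψ̂_Y = K̂ᴴ` and `Ψ̂_Yᴴ Ψ̂_Y = L̂`. For an isometry `A`
and an eigenvector `v` of `Aᴴ B` with eigenvalue `c`, expanding `‖B v - c A v‖²` gives
`vᴴ Bᴴ B v - |c|² ‖v‖²`; the normalised form follows by dividing by `‖v‖²`.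
-/

open Matrix

/-- The Euclidean (ℓ²) norm of a complex vector. -/
noncomputable def enorm {n : ℕ} (x : Fin n → ℂ) : ℝ :=
  Real.sqrt (∑ i, ‖x i‖ ^ 2)

lemma enorm_eq_norm_toLp {n : ℕ} (x : Fin n → ℂ) :
    _root_.enorm x = ‖(WithLp.toLp 2 x : EuclideanSpace ℂ (Fin n))‖ := by
  rw [EuclideanSpace.norm_eq]
  rfl

lemma enorm_pos_of_ne_zero {n : ℕ} {x : Fin n → ℂ} (hx : x ≠ 0) : 0 < _root_.enorm x := by
  rw [enorm_eq_norm_toLp]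
  exact norm_pos_iff.mpr (by simpa using hx)

lemma ofReal_enorm_sq {n : ℕ} (x : Fin n → ℂ) :
    ((_root_.enorm x ^ 2 : ℝ) : ℂ) = star x ⬝ᵥ x := by
  rw [_root_.enorm, Real.sq_sqrt (by positivity)]
  push_cast
  simp [dotProduct, Complex.conj_mul']

lemma star_mulVec_dotProduct_mulVec {R m n : Type*} [CommSemiring R] [StarRing R]
    [Fintype m] [Fintype n] (A : Matrix m n R) (B : Matrix m n R) (v w : n → R) :
    star (A *ᵥ v) ⬝ᵥ (B *ᵥ w) = star v ⬝ᵥ ((Aᴴ * B) *ᵥ w) := by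
  rw [star_mulVec, dotProduct_mulVec, vecMul_vecMul, ← dotProduct_mulVec]

lemma ofReal_enorm_residual_sq {m n : ℕ} (A B : Matrix (Fin m) (Fin n) ℂ) (hA : Aᴴ * A = 1)
    (c : ℂ) (v : Fin n → ℂ) (hv : (Aᴴ * B) *ᵥ v = c • v) :
    ((_root_.enorm (B *ᵥ v - c • (A *ᵥ v)) ^ 2 : ℝ) : ℂ) =
      star v ⬝ᵥ ((Bᴴ * B) *ᵥ v) - ((‖c‖ ^ 2 : ℝ) : ℂ) * ((_root_.enorm v ^ 2 : ℝ) : ℂ) := by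
  have hAA : star (A *ᵥ v) ⬝ᵥ (A *ᵥ v) = star v ⬝ᵥ v := by
    rw [star_mulVec_dotProduct_mulVec, hA, one_mulVec]
  have hAB : star (A *ᵥ v) ⬝ᵥ (B *ᵥ v) = c * (star v ⬝ᵥ v) := by
    rw [star_mulVec_dotProduct_mulVec, hv, dotProduct_smul, smul_eq_mul]
  have hBA : star (B *ᵥ v) ⬝ᵥ (A *ᵥ v) = star c * (star v ⬝ᵥ v) := by
    rw [star_dotProduct, hAB, star_mul', ← ofReal_enorm_sq, Complex.star_def, Complex.conj_ofReal]
  rw [ofReal_enorm_sq, ofReal_enorm_sq, ← star_mulVec_dotProduct_mulVec B B, Complex.ofReal_pow,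
    ← Complex.mul_conj', ← Complex.star_def]
  simp only [star_sub, star_smul, sub_dotProduct, dotProduct_sub, smul_dotProduct,
    dotProduct_smul, smul_eq_mul, hAA, hAB, hBA]
  ring

lemma div_eq_sqrt_of_sq_eq_sub {ρ ν t s : ℝ} (hρ : 0 ≤ ρ) (hν : 0 < ν)
    (h : ρ ^ 2 = t - s * ν ^ 2) : ρ / ν = √(t / ν ^ 2 - s) := by
  rw [div_sub' (by positivity), mul_comm (ν ^ 2), ← h, Real.sqrt_div (by positivity),
    Real.sqrt_sq hρ, Real.sqrt_sq hν.le]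

theorem kernelized_left_eigenpair_residual_general
    {M N r : ℕ}
    (PsiX PsiY : Matrix (Fin M) (Fin N) ℂ)
    (W : Matrix (Fin M) (Fin M) ℂ)
    (Qh : Matrix (Fin M) (Fin r) ℂ)
    (Zh : Matrix (Fin N) (Fin r) ℂ) (hZ : Zhᴴ * Zh = 1)
    (Sh : Matrix (Fin r) (Fin r) ℂ) (hSH : Shᴴ = Sh) (hS : IsUnit Sh.det)
    (hSVD : (W * PsiX)ᴴ * Qh = Zh * Sh)
    (PsihX PsihY : Matrix (Fin N) (Fin r) ℂ)
    (hPsihX : PsihX = (W * PsiX)ᴴ * Qh * Sh⁻¹)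
    (hPsihY : PsihY = (W * PsiY)ᴴ * Qh * Sh⁻¹)
    (Khat : Matrix (Fin r) (Fin r) ℂ)
    (hKhat : Khat = Sh⁻¹ * Qhᴴ * (W * PsiY) * (W * PsiX)ᴴ * Qh * Sh⁻¹)
    (Lhat : Matrix (Fin r) (Fin r) ℂ)
    (hLhat : Lhat = (Qh * Sh⁻¹)ᴴ * (W * PsiY) * (W * PsiY)ᴴ * (Qh * Sh⁻¹))
    (l : ℂ) (v : Fin r → ℂ)
    (hv : Khatᴴ *ᵥ v = (starRingEnd ℂ) l • v) :
    ((_root_.enorm (PsihY *ᵥ v - (starRingEnd ℂ) l • (PsihX *ᵥ v)) ^ 2 : ℝ) : ℂ) =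
        star v ⬝ᵥ (Lhat *ᵥ v) - ((‖l‖ ^ 2 : ℝ) : ℂ) * ((_root_.enorm v ^ 2 : ℝ) : ℂ) ∧
      (v ≠ 0 →
        _root_.enorm (PsihY *ᵥ v - (starRingEnd ℂ) l • (PsihX *ᵥ v)) / _root_.enorm v =
          Real.sqrt ((star v ⬝ᵥ (Lhat *ᵥ v)).re / _root_.enorm v ^ 2 - ‖l‖ ^ 2)) := by
  have hSinvH : (Sh⁻¹)ᴴ = Sh⁻¹ := by rw [conjTranspose_nonsing_inv, hSH]
  have hPsihX_eq : PsihX = Zh := by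
    rw [hPsihX, hSVD, Matrix.mul_assoc, mul_nonsing_inv Sh hS, Matrix.mul_one]
  have hXY : PsihXᴴ * PsihY = Khatᴴ := by
    simp only [hPsihX, hPsihY, hKhat, conjTranspose_mul, conjTranspose_conjTranspose, hSinvH,
      Matrix.mul_assoc]
  have hYY : PsihYᴴ * PsihY = Lhat := by
    simp only [hPsihY, hLhat, conjTranspose_mul, conjTranspose_conjTranspose, hSinvH,
      Matrix.mul_assoc]
  have hresidual := ofReal_enorm_residual_sq PsihX PsihY (hPsihX_eq ▸ hZ) _ v (hXY ▸ hv)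
  rw [hYY, Complex.norm_conj] at hresidual
  refine ⟨hresidual, fun hv0 =>
    div_eq_sqrt_of_sq_eq_sub (Real.sqrt_nonneg _) (enorm_pos_of_ne_zero hv0) ?_⟩
  simpa only [Complex.ofReal_re, Complex.sub_re, Complex.re_ofReal_mul] using
    congrArg Complex.re hresidual

/-- (Simplified residual for left eigenpairs of kernelized EDMD, Algorithm 5.) If `v` is a
left eigenvector of `K̂` with eigenvalue `λ` (i.e. `K̂ᴴ v = λ̄ v`), then
`‖Ψ̂_Y v − λ̄ Ψ̂_X v‖² = vᴴ L̂ v − |λ|² ‖v‖²`; hence for `v ≠ 0` the residual equals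
`sqrt((vᴴ L̂ v)/‖v‖² − |λ|²)`. -/
theorem kernelized_left_eigenpair_residual
    {M N r : ℕ}
    (PsiX PsiY : Matrix (Fin M) (Fin N) ℂ)
    (W : Matrix (Fin M) (Fin M) ℂ)
    (Qh : Matrix (Fin M) (Fin r) ℂ) (hQ : Qhᴴ * Qh = 1)
    (Zh : Matrix (Fin N) (Fin r) ℂ) (hZ : Zhᴴ * Zh = 1)
    (Sh : Matrix (Fin r) (Fin r) ℂ) (hSH : Shᴴ = Sh) (hS : IsUnit Sh.det)
    (hSVD : (W * PsiX)ᴴ * Qh = Zh * Sh)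
    (PsihX PsihY : Matrix (Fin N) (Fin r) ℂ)
    (hPsihX : PsihX = (W * PsiX)ᴴ * Qh * Sh⁻¹)
    (hPsihY : PsihY = (W * PsiY)ᴴ * Qh * Sh⁻¹)
    (Khat : Matrix (Fin r) (Fin r) ℂ)
    (hKhat : Khat = Sh⁻¹ * Qhᴴ * (W * PsiY) * (W * PsiX)ᴴ * Qh * Sh⁻¹)
    (Lhat : Matrix (Fin r) (Fin r) ℂ)
    (hLhat : Lhat = (Qh * Sh⁻¹)ᴴ * (W * PsiY) * (W * PsiY)ᴴ * (Qh * Sh⁻¹))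
    (l : ℂ) (v : Fin r → ℂ)
    (hv : Khatᴴ *ᵥ v = (starRingEnd ℂ) l • v) :
    ((_root_.enorm (PsihY *ᵥ v - (starRingEnd ℂ) l • (PsihX *ᵥ v)) ^ 2 : ℝ) : ℂ) =
        star v ⬝ᵥ (Lhat *ᵥ v) - ((‖l‖ ^ 2 : ℝ) : ℂ) * ((_root_.enorm v ^ 2 : ℝ) : ℂ) ∧
      (v ≠ 0 →
        _root_.enorm (PsihY *ᵥ v - (starRingEnd ℂ) l • (PsihX *ᵥ v)) / _root_.enorm v =
          Real.sqrt ((star v ⬝ᵥ (Lhat *ᵥ v)).re / _root_.enorm v ^ 2 - ‖l‖ ^ 2)) :=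
  kernelized_left_eigenpair_residual_general PsiX PsiY W Qh Zh hZ Sh hSH hS hSVD PsihX PsihY hPsihX
    hPsihY Khat hKhat Lhat hLhat l v hv
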